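/- Sklar's theorem, uniqueness part: if F and G are continuous distribution functions and C, C' are copulas with C(F(x), G(y)) = C'(F(x), G(y)) for all real x, y, then C = C' on [0,1]². -/

import Mathlib

open Set

/-- A bivariate copula on [0,1]². -/
structure Copula where
  toFun : ℝ → ℝ → ℝ
  mem_Icc : ∀ u ∈ Icc (0:ℝ) 1, ∀ v ∈ Icc (0:ℝ) 1, toFun u v ∈ Icc (0:ℝ) 1
  grounded_left : ∀ u ∈ Icc (0:ℝ) 1, toFun u 0 = 0
  grounded_right : ∀ v ∈ Icc (0:ℝ) 1, toFun 0 v = 0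
  margin_left : ∀ u ∈ Icc (0:ℝ) 1, toFun u 1 = u
  margin_right : ∀ v ∈ Icc (0:ℝ) 1, toFun 1 v = v
  two_increasing : ∀ u₁ ∈ Icc (0:ℝ) 1, ∀ u₂ ∈ Icc (0:ℝ) 1, ∀ v₁ ∈ Icc (0:ℝ) 1,
    ∀ v₂ ∈ Icc (0:ℝ) 1, u₁ ≤ u₂ → v₁ ≤ v₂ →
      0 ≤ toFun u₂ v₂ - toFun u₂ v₁ - toFun u₁ v₂ + toFun u₁ v₁

open Filter Topology

theorem Continuous.Ioo_subset_range_of_tendsto {X α : Type*} [TopologicalSpace X]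
    [PreconnectedSpace X] [LinearOrder α] [TopologicalSpace α] [OrderTopology α]
    {f : X → α} (hf : Continuous f) {l₁ l₂ : Filter X} [l₁.NeBot] [l₂.NeBot] {a b : α}
    (ha : Tendsto f l₁ (𝓝 a)) (hb : Tendsto f l₂ (𝓝 b)) : Ioo a b ⊆ range f := fun _ hc ↦
  mem_range_of_exists_le_of_exists_ge hf
    (ha.eventually (ge_mem_nhds hc.1)).exists (hb.eventually (le_mem_nhds hc.2)).exists

namespace Copula

theorem eq_on_Icc_of_eq_on_Ioo (C C' : Copula)
    (h : ∀ u ∈ Ioo (0:ℝ) 1, ∀ v ∈ Ioo (0:ℝ) 1, C.toFun u v = C'.toFun u v) :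
    ∀ u ∈ Icc (0:ℝ) 1, ∀ v ∈ Icc (0:ℝ) 1, C.toFun u v = C'.toFun u v := by
  intro u hu v hv
  rcases hu.1.eq_or_lt with rfl | hu₀
  · rw [C.grounded_right v hv, C'.grounded_right v hv]
  rcases hu.2.eq_or_lt with rfl | hu₁
  · rw [C.margin_right v hv, C'.margin_right v hv]
  rcases hv.1.eq_or_lt with rfl | hv₀
  · rw [C.grounded_left u hu, C'.grounded_left u hu]
  rcases hv.2.eq_or_lt with rfl | hv₁
  · rw [C.margin_left u hu, C'.margin_left u hu]
  exact h u ⟨hu₀, hu₁⟩ v ⟨hv₀, hv₁⟩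

end Copula

open Filter in
theorem sklar_uniqueness_general (F G : ℝ → ℝ) (hFc : Continuous F) (hGc : Continuous G)
    (hF0 : Tendsto F atBot (nhds 0)) (hF1 : Tendsto F atTop (nhds 1))
    (hG0 : Tendsto G atBot (nhds 0)) (hG1 : Tendsto G atTop (nhds 1))
    (C C' : Copula)
    (h : ∀ x y : ℝ, C.toFun (F x) (G y) = C'.toFun (F x) (G y)) :
    ∀ u ∈ Icc (0:ℝ) 1, ∀ v ∈ Icc (0:ℝ) 1, C.toFun u v = C'.toFun u v := by
  refine Copula.eq_on_Icc_of_eq_on_Ioo C C' fun u hu v hv ↦ ?_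
  obtain ⟨x, rfl⟩ := hFc.Ioo_subset_range_of_tendsto hF0 hF1 hu
  obtain ⟨y, rfl⟩ := hGc.Ioo_subset_range_of_tendsto hG0 hG1 hv
  exact h x y

open Filter in
/-- Uniqueness part of Sklar's theorem for continuous marginals. -/
theorem sklar_uniqueness (F G : ℝ → ℝ) (hFc : Continuous F) (hGc : Continuous G)
    (hFm : Monotone F) (hGm : Monotone G)
    (hF0 : Tendsto F atBot (nhds 0)) (hF1 : Tendsto F atTop (nhds 1))
    (hG0 : Tendsto G atBot (nhds 0)) (hG1 : Tendsto G atTop (nhds 1))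
    (C C' : Copula)
    (h : ∀ x y : ℝ, C.toFun (F x) (G y) = C'.toFun (F x) (G y)) :
    ∀ u ∈ Icc (0:ℝ) 1, ∀ v ∈ Icc (0:ℝ) 1, C.toFun u v = C'.toFun u v :=
  sklar_uniqueness_general F G hFc hGc hF0 hF1 hG0 hG1 C C' h
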